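/- Let μ and ν be probability measures on a finite set X with probability distributions p and q, let c: X × X → ℝ≥0 with κ > max c(x,y), and define c_a on 2^X × 2^X by: c_a({x},{y}) = c(x,y); c_a({x},B) = c_a(A,{y}) = κ when the other argument is a non-singleton (including ∅); c_a(A,B) = 0 when both A and B are non-singletons. Consider the (max,+)-transform transport problem: minimize ∑ c_a(A,B)·assg(A,B) over nonnegative assg with assg(∅,∅) = 0, ∑_{B ⊆ X} assg(A,B) = τ_μ(A) for nonempty A, ∑_{A ⊆ X} assg(A,B) = τ_ν(B) for nonempty B, where τ_μ, τ_ν are (max,+)-transforms. Then the optimal value equals the optimal value of the classical transport problem between p and q with cost c, and an optimal assg restricted to singleton pairs is an optimal classical transport plan. -/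

import Mathlib

/-! The cost of a max-plus plan is its cost on pairs of singletons plus `κ` times the mass that
singletons exchange with non-singletons, counted once on the row side and once on the column
side; the two excesses have the same total because `p` and `q` both have mass one. Completing the
singleton part by the product coupling of the excesses gives a classical plan that costs at most
`κ` per unit of excess, so a max-plus plan costs at least the classical optimum plus `κ` times its
excess. Conversely a classical plan lifts to a max-plus plan of the same cost, by matching each
non-singleton `A` with `∅` with mass `τ_μ(A)` (and symmetrically), at cost `0`. So the optima
agree, an optimal max-plus plan has no excess, and its singleton part is an optimal classical
plan. -/

open Finset

/-- The (max,+)-transform of a set function `μ`: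
`τ_μ(B) = μ(B) − max_{A ⊊ B} μ(A)` for nonempty `B`, and `0` on `∅`. -/
noncomputable def tauMax {X : Type*} [DecidableEq X] (μ : Finset X → ℝ) (B : Finset X) : ℝ :=
  if h : B.Nonempty then
    μ B - (B.powerset.erase B).sup'
      ⟨∅, Finset.mem_erase.mpr ⟨Ne.symm h.ne_empty, Finset.empty_mem_powerset B⟩⟩ μ
  else 0

/-- Feasibility for the classical optimal transport problem between the
distributions `x ↦ μ {x}` and `y ↦ ν {y}` on the same reference set. -/
def ClassFeas {X : Type*} [Fintype X] [DecidableEq X]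
    (μ ν : Finset X → ℝ) (γ : X → X → ℝ) : Prop :=
  (∀ x y, 0 ≤ γ x y) ∧ (∀ x, ∑ y, γ x y = μ {x}) ∧ (∀ y, ∑ x, γ x y = ν {y})

/-- Feasibility for the (max,+)-transform transport problem. -/
noncomputable def MaxPlusFeas {X : Type*} [Fintype X] [DecidableEq X]
    (μ ν : Finset X → ℝ) (assg : Finset X → Finset X → ℝ) : Prop :=
  (∀ A B : Finset X, 0 ≤ assg A B ∧ assg A B ≤ 1) ∧
  assg ∅ ∅ = 0 ∧
  (∀ A : Finset X, A.Nonempty → ∑ B : Finset X, assg A B = tauMax μ A) ∧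
  (∀ B : Finset X, B.Nonempty → ∑ A : Finset X, assg A B = tauMax ν B)

lemma csInf_eq_csInf_of_subset {α : Type*} [ConditionallyCompleteLattice α] {S T : Set α}
    (hS : S.Nonempty) (hST : S ⊆ T) (hT : sInf S ∈ lowerBounds T) : sInf S = sInf T :=
  le_antisymm (le_csInf (hS.mono hST) hT) (csInf_le_csInf ⟨_, hT⟩ hS hST)

section SetFunction

variable {X : Type*} [DecidableEq X] {μ : Finset X → ℝ}

lemma monotone_of_additive (hnonneg : ∀ A, 0 ≤ μ A)
    (hadd : ∀ A B, Disjoint A B → μ (A ∪ B) = μ A + μ B) : Monotone μ := by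
  intro A B hAB
  have h := hadd A (B \ A) disjoint_sdiff
  rw [union_sdiff_of_subset hAB] at h
  linarith [hnonneg (B \ A)]

lemma sum_apply_singleton_of_additive (h0 : μ ∅ = 0)
    (hadd : ∀ A B, Disjoint A B → μ (A ∪ B) = μ A + μ B) (S : Finset X) :
    ∑ x ∈ S, μ {x} = μ S := by
  induction S using Finset.induction with
  | empty => simpa using h0.symm
  | insert a S ha ih =>
    rw [sum_insert ha, ih, insert_eq, hadd _ _ (disjoint_singleton_left.mpr ha)]

@[simp]
lemma tauMax_empty : tauMax μ ∅ = 0 := by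
  simp [tauMax]

lemma tauMax_singleton (h0 : μ ∅ = 0) (x : X) : tauMax μ {x} = μ {x} := by
  have hsub : ({x} : Finset X).powerset.erase {x} = {∅} := by
    ext B
    simp only [mem_erase, mem_powerset, subset_singleton_iff, mem_singleton]
    aesop
  simp [tauMax, hsub, h0]

lemma tauMax_nonneg (hμ : Monotone μ) (A : Finset X) : 0 ≤ tauMax μ A := by
  unfold tauMax
  split
  · exact sub_nonneg.2 <| sup'_le _ _ fun B hB => hμ (mem_powerset.1 (mem_of_mem_erase hB))
  · exact le_rfl

lemma tauMax_le_one (h0 : 0 ≤ μ ∅) (h1 : ∀ A, μ A ≤ 1) (A : Finset X) : tauMax μ A ≤ 1 := by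
  unfold tauMax
  split
  case isTrue hA =>
    have : μ ∅ ≤ (A.powerset.erase A).sup' _ μ :=
      le_sup' μ (mem_erase.2 ⟨hA.ne_empty.symm, empty_mem_powerset A⟩)
    linarith [h1 A]
  case isFalse => exact zero_le_one

end SetFunction

section Singletons

lemma not_exists_singleton_eq {X : Type*} {B : Finset X} (hB : B.card ≠ 1) : ¬∃ y, {y} = B := by
  rintro ⟨y, rfl⟩
  exact hB (card_singleton y)

variable (X : Type*) [Fintype X]

def nonSingletons : Finset (Finset X) := univ.filter fun B => B.card ≠ 1

variable {X}

@[simp]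
lemma mem_nonSingletons {B : Finset X} : B ∈ nonSingletons X ↔ B.card ≠ 1 := by
  simp [nonSingletons]

lemma sum_eq_sum_singleton_add_sum_nonSingletons [DecidableEq X] {M : Type*} [AddCommMonoid M]
    (g : Finset X → M) : ∑ B, g B = ∑ y, g {y} + ∑ B ∈ nonSingletons X, g B := by
  have hsingletons :
      univ.filter (fun B : Finset X => B.card = 1) = univ.map ⟨_, singleton_injective⟩ := by
    ext B
    simp [card_eq_one, eq_comm]
  rw [← sum_filter_add_sum_filter_not univ (fun B => B.card = 1), hsingletons, sum_map]
  rfl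

end Singletons

section ProductCoupling

variable {ι : Type*} {s : Finset ι} {m n : ι → ℝ}

lemma mul_div_sum_nonneg (hm : ∀ i ∈ s, 0 ≤ m i) {i j : ι} (hi : 0 ≤ m i) (hj : 0 ≤ n j) :
    0 ≤ m i * n j / ∑ k ∈ s, m k :=
  div_nonneg (mul_nonneg hi hj) (sum_nonneg hm)

lemma sum_mul_div_sum_eq_left (hm : ∀ i ∈ s, 0 ≤ m i) (hmn : ∑ i ∈ s, m i = ∑ j ∈ s, n j)
    (i : ι) (hi : i ∈ s) : ∑ j ∈ s, m i * n j / ∑ k ∈ s, m k = m i := by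
  rw [← sum_div, ← mul_sum, ← hmn]
  rcases eq_or_ne (∑ k ∈ s, m k) 0 with h | h
  · rw [(sum_eq_zero_iff_of_nonneg hm).1 h i hi, zero_mul, zero_div]
  · exact mul_div_cancel_right₀ _ h

lemma sum_mul_div_sum_eq_right (hn : ∀ j ∈ s, 0 ≤ n j) (hmn : ∑ i ∈ s, m i = ∑ j ∈ s, n j)
    (j : ι) (hj : j ∈ s) : ∑ i ∈ s, m i * n j / ∑ k ∈ s, m k = n j := by
  simp_rw [mul_comm (m _)]
  rw [hmn]
  exact sum_mul_div_sum_eq_left hn hmn.symm j hj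

lemma sum_sum_mul_mul_div_sum_le {c : ι → ι → ℝ} {κ : ℝ} (hc : ∀ i ∈ s, ∀ j ∈ s, c i j ≤ κ)
    (hm : ∀ i ∈ s, 0 ≤ m i) (hn : ∀ j ∈ s, 0 ≤ n j) (hmn : ∑ i ∈ s, m i = ∑ j ∈ s, n j) :
    ∑ i ∈ s, ∑ j ∈ s, c i j * (m i * n j / ∑ k ∈ s, m k) ≤ κ * ∑ i ∈ s, m i :=
  calc ∑ i ∈ s, ∑ j ∈ s, c i j * (m i * n j / ∑ k ∈ s, m k)
      ≤ ∑ i ∈ s, ∑ j ∈ s, κ * (m i * n j / ∑ k ∈ s, m k) := by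
        gcongr with i hi j hj
        · exact mul_div_sum_nonneg hm (hm i hi) (hn j hj)
        · exact hc i hi j hj
    _ = κ * ∑ i ∈ s, m i := by
        rw [mul_sum]
        exact sum_congr rfl fun i hi => by rw [← mul_sum, sum_mul_div_sum_eq_left hm hmn i hi]

end ProductCoupling

section ClassicalTransport

variable {X : Type*} [Fintype X] [DecidableEq X] {μ ν : Finset X → ℝ} {c : X → X → ℝ}

def transportCosts (μ ν : Finset X → ℝ) (c : X → X → ℝ) : Set ℝ :=
  {t | ∃ γ : X → X → ℝ, ClassFeas μ ν γ ∧ t = ∑ x, ∑ y, c x y * γ x y}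

lemma bddBelow_transportCosts (hc : ∀ x y, 0 ≤ c x y) : BddBelow (transportCosts μ ν c) := by
  refine ⟨0, ?_⟩
  rintro _ ⟨γ, hγ, rfl⟩
  exact sum_nonneg fun x _ => sum_nonneg fun y _ => mul_nonneg (hc x y) (hγ.1 x y)

lemma classFeas_add_outer {γ : X → X → ℝ} {m n : X → ℝ} (hγ : ∀ x y, 0 ≤ γ x y)
    (hm : ∀ x, 0 ≤ m x) (hn : ∀ y, 0 ≤ n y) (hmn : ∑ x, m x = ∑ y, n y)
    (hrow : ∀ x, ∑ y, γ x y + m x = μ {x}) (hcol : ∀ y, ∑ x, γ x y + n y = ν {y}) :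
    ClassFeas μ ν fun x y => γ x y + m x * n y / ∑ z, m z := by
  refine ⟨fun x y => add_nonneg (hγ x y) (mul_div_sum_nonneg (fun x _ => hm x) (hm x) (hn y)),
    fun x => ?_, fun y => ?_⟩
  · rw [sum_add_distrib, sum_mul_div_sum_eq_left (fun x _ => hm x) hmn x (mem_univ x), hrow]
  · rw [sum_add_distrib, sum_mul_div_sum_eq_right (fun y _ => hn y) hmn y (mem_univ y), hcol]

lemma transportCosts_nonempty (hμ : ∀ x, 0 ≤ μ {x}) (hν : ∀ y, 0 ≤ ν {y})
    (hμν : ∑ x, μ {x} = ∑ y, ν {y}) : (transportCosts μ ν c).Nonempty :=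
  ⟨_, _, classFeas_add_outer (fun _ _ => le_rfl) hμ hν hμν (by simp) (by simp), rfl⟩

end ClassicalTransport

section MaxPlusTransport

variable {X : Type*} [Fintype X] [DecidableEq X] {μ ν : Finset X → ℝ}
  {assg : Finset X → Finset X → ℝ}

def maxPlusCosts (μ ν : Finset X → ℝ) (ca : Finset X → Finset X → ℝ) : Set ℝ :=
  {t | ∃ assg : Finset X → Finset X → ℝ, MaxPlusFeas μ ν assg ∧
    t = ∑ A : Finset X, ∑ B : Finset X, ca A B * assg A B}

def rowExcess (assg : Finset X → Finset X → ℝ) (x : X) : ℝ :=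
  ∑ B ∈ nonSingletons X, assg {x} B

abbrev colExcess (assg : Finset X → Finset X → ℝ) : X → ℝ :=
  rowExcess (flip assg)

structure IsLiftedCost (c : X → X → ℝ) (κ : ℝ) (ca : Finset X → Finset X → ℝ) : Prop where
  singleton_singleton : ∀ x y : X, ca {x} {y} = c x y
  singleton_left : ∀ A B : Finset X, A.card = 1 → B.card ≠ 1 → ca A B = κ
  singleton_right : ∀ A B : Finset X, A.card ≠ 1 → B.card = 1 → ca A B = κ
  nonSingleton : ∀ A B : Finset X, A.card ≠ 1 → B.card ≠ 1 → ca A B = 0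

lemma IsLiftedCost.sum_mul_eq {c : X → X → ℝ} {κ : ℝ} {ca : Finset X → Finset X → ℝ}
    (hca : IsLiftedCost c κ ca) (assg : Finset X → Finset X → ℝ) :
    ∑ A, ∑ B, ca A B * assg A B = ∑ x, ∑ y, c x y * assg {x} {y} +
      κ * (∑ x, rowExcess assg x + ∑ y, colExcess assg y) := by
  have hsingleton_row (x : X) : ∑ B, ca {x} B * assg {x} B =
      ∑ y, c x y * assg {x} {y} + κ * rowExcess assg x := by
    rw [sum_eq_sum_singleton_add_sum_nonSingletons, rowExcess, mul_sum]
    congr 1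
    · exact sum_congr rfl fun y _ => by rw [hca.singleton_singleton]
    · exact sum_congr rfl fun B hB => by
        rw [hca.singleton_left _ _ (card_singleton x) (mem_nonSingletons.1 hB)]
  have hnonsingleton_row (A) (hA : A ∈ nonSingletons X) :
      ∑ B, ca A B * assg A B = κ * ∑ y, assg A {y} := by
    rw [sum_eq_sum_singleton_add_sum_nonSingletons, mul_sum,
      sum_eq_zero (s := nonSingletons X) fun B hB => by
        rw [hca.nonSingleton _ _ (mem_nonSingletons.1 hA) (mem_nonSingletons.1 hB), zero_mul],
      add_zero]
    exact sum_congr rfl fun y _ => by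
      rw [hca.singleton_right _ _ (mem_nonSingletons.1 hA) (card_singleton y)]
  rw [sum_eq_sum_singleton_add_sum_nonSingletons, sum_congr rfl fun x _ => hsingleton_row x,
    sum_congr rfl hnonsingleton_row, sum_add_distrib, ← mul_sum, ← mul_sum,
    sum_comm (s := nonSingletons X)]
  simp only [colExcess, rowExcess, flip]
  ring

namespace MaxPlusFeas

lemma flip (h : MaxPlusFeas μ ν assg) : MaxPlusFeas ν μ (flip assg) :=
  ⟨fun A B => h.1 B A, h.2.1, h.2.2.2, h.2.2.1⟩

lemma rowExcess_nonneg (h : MaxPlusFeas μ ν assg) (x : X) : 0 ≤ rowExcess assg x :=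
  sum_nonneg fun _ _ => (h.1 _ _).1

lemma sum_add_rowExcess (h : MaxPlusFeas μ ν assg) (hμ0 : μ ∅ = 0) (x : X) :
    ∑ y, assg {x} {y} + rowExcess assg x = μ {x} := by
  rw [rowExcess, ← sum_eq_sum_singleton_add_sum_nonSingletons, h.2.2.1 {x} (singleton_nonempty x),
    tauMax_singleton hμ0]

lemma sum_add_colExcess (h : MaxPlusFeas μ ν assg) (hν0 : ν ∅ = 0) (y : X) :
    ∑ x, assg {x} {y} + colExcess assg y = ν {y} :=
  h.flip.sum_add_rowExcess hν0 y

lemma sum_rowExcess_eq_sum_colExcess (h : MaxPlusFeas μ ν assg) (hμ0 : μ ∅ = 0) (hν0 : ν ∅ = 0)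
    (hμν : ∑ x, μ {x} = ∑ y, ν {y}) : ∑ x, rowExcess assg x = ∑ y, colExcess assg y := by
  have hrow := sum_congr rfl fun x (_ : x ∈ univ) => h.sum_add_rowExcess hμ0 x
  have hcol := sum_congr rfl fun y (_ : y ∈ univ) => h.sum_add_colExcess hν0 y
  rw [sum_add_distrib] at hrow hcol
  rw [sum_comm] at hcol
  linarith

lemma classFeas_of_sum_rowExcess_eq_zero (h : MaxPlusFeas μ ν assg) (hμ0 : μ ∅ = 0)
    (hν0 : ν ∅ = 0) (hμν : ∑ x, μ {x} = ∑ y, ν {y}) (hE : ∑ x, rowExcess assg x = 0) :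
    ClassFeas μ ν fun x y => assg {x} {y} := by
  have hrow := (sum_eq_zero_iff_of_nonneg fun x _ => h.rowExcess_nonneg x).1 hE
  have hcol := (sum_eq_zero_iff_of_nonneg fun y _ => h.flip.rowExcess_nonneg y).1
    (h.sum_rowExcess_eq_sum_colExcess hμ0 hν0 hμν ▸ hE)
  refine ⟨fun x y => (h.1 _ _).1, fun x => ?_, fun y => ?_⟩
  · simpa [hrow x] using h.sum_add_rowExcess hμ0 x
  · simpa [hcol y] using h.sum_add_colExcess hν0 y

lemma csInf_transportCosts_add_le {c : X → X → ℝ} {κ : ℝ} {ca : Finset X → Finset X → ℝ}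
    (h : MaxPlusFeas μ ν assg) (hμ0 : μ ∅ = 0) (hν0 : ν ∅ = 0)
    (hμν : ∑ x, μ {x} = ∑ y, ν {y}) (hc : ∀ x y, 0 ≤ c x y) (hcκ : ∀ x y, c x y ≤ κ)
    (hca : IsLiftedCost c κ ca) :
    sInf (transportCosts μ ν c) + κ * ∑ x, rowExcess assg x ≤
      ∑ A, ∑ B, ca A B * assg A B := by
  have hE := h.sum_rowExcess_eq_sum_colExcess hμ0 hν0 hμν
  have hcompletion := classFeas_add_outer (fun x y => (h.1 {x} {y}).1) h.rowExcess_nonneg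
    h.flip.rowExcess_nonneg hE (h.sum_add_rowExcess hμ0) (h.sum_add_colExcess hν0)
  have hle := csInf_le (bddBelow_transportCosts hc) ⟨_, hcompletion, rfl⟩
  have hcoupling := sum_sum_mul_mul_div_sum_le (fun x _ y _ => hcκ x y)
    (fun x _ => h.rowExcess_nonneg x) (fun y _ => h.flip.rowExcess_nonneg y) hE
  simp only [mul_add, sum_add_distrib] at hle
  rw [hca.sum_mul_eq, ← hE]
  linarith

lemma sum_rowExcess_eq_zero_of_le {c : X → X → ℝ} {κ : ℝ} {ca : Finset X → Finset X → ℝ}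
    (h : MaxPlusFeas μ ν assg) (hμ0 : μ ∅ = 0) (hν0 : ν ∅ = 0)
    (hμν : ∑ x, μ {x} = ∑ y, ν {y}) (hc : ∀ x y, 0 ≤ c x y) (hcκ : ∀ x y, c x y ≤ κ)
    (hca : IsLiftedCost c κ ca) (hκ : 0 < κ)
    (hle : ∑ A, ∑ B, ca A B * assg A B ≤ sInf (transportCosts μ ν c)) :
    ∑ x, rowExcess assg x = 0 := by
  have := h.csInf_transportCosts_add_le hμ0 hν0 hμν hc hcκ hca
  exact le_antisymm (nonpos_of_mul_nonpos_right (by linarith) hκ)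
    (sum_nonneg fun x _ => h.rowExcess_nonneg x)

lemma sum_mul_eq_of_sum_rowExcess_eq_zero {c : X → X → ℝ} {κ : ℝ}
    {ca : Finset X → Finset X → ℝ} (h : MaxPlusFeas μ ν assg) (hμ0 : μ ∅ = 0) (hν0 : ν ∅ = 0)
    (hμν : ∑ x, μ {x} = ∑ y, ν {y}) (hca : IsLiftedCost c κ ca)
    (hE : ∑ x, rowExcess assg x = 0) :
    ∑ A, ∑ B, ca A B * assg A B = ∑ x, ∑ y, c x y * assg {x} {y} := by
  rw [hca.sum_mul_eq, ← h.sum_rowExcess_eq_sum_colExcess hμ0 hν0 hμν, hE]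
  ring

end MaxPlusFeas

lemma csInf_transportCosts_mem_lowerBounds {c : X → X → ℝ} {κ : ℝ}
    {ca : Finset X → Finset X → ℝ} (hμ0 : μ ∅ = 0) (hν0 : ν ∅ = 0)
    (hμν : ∑ x, μ {x} = ∑ y, ν {y}) (hc : ∀ x y, 0 ≤ c x y) (hcκ : ∀ x y, c x y ≤ κ)
    (hca : IsLiftedCost c κ ca) (hκ : 0 ≤ κ) :
    sInf (transportCosts μ ν c) ∈ lowerBounds (maxPlusCosts μ ν ca) := by
  rintro _ ⟨assg, h, rfl⟩
  have := h.csInf_transportCosts_add_le hμ0 hν0 hμν hc hcκ hca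
  have := mul_nonneg hκ (sum_nonneg fun x (_ : x ∈ univ) => h.rowExcess_nonneg x)
  linarith

end MaxPlusTransport

section LiftPlan

lemma extend_singleton_pair_of_card_ne_one {X : Type*} {γ : X → X → ℝ} {A B : Finset X}
    (h : A.card ≠ 1 ∨ B.card ≠ 1) :
    Function.extend (Prod.map singleton singleton) (Function.uncurry γ) 0 (A, B) = 0 := by
  refine Function.extend_apply' _ _ _ ?_
  rintro ⟨⟨x, y⟩, hxy⟩
  obtain ⟨rfl, rfl⟩ := Prod.ext_iff.1 hxy
  simp at h

variable {X : Type*} [DecidableEq X] {μ ν : Finset X → ℝ} {γ : X → X → ℝ}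

noncomputable def liftPlan (μ ν : Finset X → ℝ) (γ : X → X → ℝ) (A B : Finset X) : ℝ :=
  if A.card ≠ 1 ∧ B = ∅ then tauMax μ A
  else if A = ∅ ∧ B.card ≠ 1 then tauMax ν B
  else Function.extend (Prod.map singleton singleton) (Function.uncurry γ) 0 (A, B)

lemma liftPlan_singleton_singleton (x y : X) : liftPlan μ ν γ {x} {y} = γ x y := by
  simpa [liftPlan] using
    (singleton_injective.prodMap singleton_injective).extend_apply (Function.uncurry γ) 0 (x, y)

lemma liftPlan_singleton_left {B : Finset X} (hB : B.card ≠ 1) (x : X) :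
    liftPlan μ ν γ {x} B = 0 := by
  simp [liftPlan, extend_singleton_pair_of_card_ne_one (Or.inr hB)]

lemma liftPlan_singleton_right {A : Finset X} (hA : A.card ≠ 1) (y : X) :
    liftPlan μ ν γ A {y} = 0 := by
  simp [liftPlan, extend_singleton_pair_of_card_ne_one (Or.inl hA)]

lemma liftPlan_of_card_ne_one_left {A : Finset X} (hA : A.card ≠ 1) (hne : A.Nonempty)
    (B : Finset X) : liftPlan μ ν γ A B = if B = ∅ then tauMax μ A else 0 := by
  simp [liftPlan, hA, hne.ne_empty, extend_singleton_pair_of_card_ne_one (Or.inl hA)]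

lemma liftPlan_of_card_ne_one_right {B : Finset X} (hB : B.card ≠ 1) (hne : B.Nonempty)
    (A : Finset X) : liftPlan μ ν γ A B = if A = ∅ then tauMax ν B else 0 := by
  by_cases hA : A = ∅
  · simp [liftPlan, hA, hB, hne.ne_empty]
  · simp [liftPlan, hA, hne.ne_empty, extend_singleton_pair_of_card_ne_one (Or.inr hB)]

lemma liftPlan_mem (P : ℝ → Prop) (hγ : ∀ x y, P (γ x y)) (hμ : ∀ A, P (tauMax μ A))
    (hν : ∀ B, P (tauMax ν B)) (h0 : P 0) (A B : Finset X) : P (liftPlan μ ν γ A B) := by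
  classical
  simp only [liftPlan, Function.extend_def]
  split_ifs
  exacts [hμ A, hν B, hγ _ _, h0]

end LiftPlan

section LiftPlanFeasible

variable {X : Type*} [Fintype X] [DecidableEq X] {μ ν : Finset X → ℝ} {γ : X → X → ℝ}

lemma rowExcess_liftPlan (x : X) : rowExcess (liftPlan μ ν γ) x = 0 :=
  sum_eq_zero fun _ hB => liftPlan_singleton_left (mem_nonSingletons.1 hB) x

lemma colExcess_liftPlan (y : X) : colExcess (liftPlan μ ν γ) y = 0 :=
  sum_eq_zero fun _ hA => liftPlan_singleton_right (mem_nonSingletons.1 hA) y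

lemma sum_liftPlan_left (hμ0 : μ ∅ = 0) (hγ : ClassFeas μ ν γ) {A : Finset X}
    (hA : A.Nonempty) : ∑ B, liftPlan μ ν γ A B = tauMax μ A := by
  by_cases hA1 : A.card = 1
  · obtain ⟨x, rfl⟩ := card_eq_one.1 hA1
    rw [sum_eq_sum_singleton_add_sum_nonSingletons, sum_eq_zero fun _ hB =>
      liftPlan_singleton_left (mem_nonSingletons.1 hB) x, add_zero,
      tauMax_singleton hμ0, ← hγ.2.1 x]
    exact sum_congr rfl fun y _ => liftPlan_singleton_singleton x y
  · simp [liftPlan_of_card_ne_one_left hA1 hA]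

lemma sum_liftPlan_right (hν0 : ν ∅ = 0) (hγ : ClassFeas μ ν γ) {B : Finset X}
    (hB : B.Nonempty) : ∑ A, liftPlan μ ν γ A B = tauMax ν B := by
  by_cases hB1 : B.card = 1
  · obtain ⟨y, rfl⟩ := card_eq_one.1 hB1
    rw [sum_eq_sum_singleton_add_sum_nonSingletons, sum_eq_zero fun _ hA =>
      liftPlan_singleton_right (mem_nonSingletons.1 hA) y, add_zero,
      tauMax_singleton hν0, ← hγ.2.2 y]
    exact sum_congr rfl fun x _ => liftPlan_singleton_singleton x y
  · simp [liftPlan_of_card_ne_one_right hB1 hB]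

lemma maxPlusFeas_liftPlan (hμ0 : μ ∅ = 0) (hν0 : ν ∅ = 0) (hμ : Monotone μ) (hν : Monotone ν)
    (hμ1 : ∀ A, μ A ≤ 1) (hν1 : ∀ B, ν B ≤ 1) (hγ : ClassFeas μ ν γ) :
    MaxPlusFeas μ ν (liftPlan μ ν γ) := by
  have hγ1 (x y : X) : γ x y ≤ 1 :=
    calc γ x y ≤ ∑ y', γ x y' := single_le_sum (fun y' _ => hγ.1 x y') (mem_univ y)
      _ = μ {x} := hγ.2.1 x
      _ ≤ 1 := hμ1 {x}
  refine ⟨liftPlan_mem (fun t => 0 ≤ t ∧ t ≤ 1) (fun x y => ⟨hγ.1 x y, hγ1 x y⟩)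
    (fun A => ⟨tauMax_nonneg hμ A, tauMax_le_one hμ0.ge hμ1 A⟩)
    (fun B => ⟨tauMax_nonneg hν B, tauMax_le_one hν0.ge hν1 B⟩) ⟨le_rfl, zero_le_one⟩,
    by simp [liftPlan], fun A hA => sum_liftPlan_left hμ0 hγ hA,
    fun B hB => sum_liftPlan_right hν0 hγ hB⟩

lemma IsLiftedCost.sum_mul_liftPlan {c : X → X → ℝ} {κ : ℝ} {ca : Finset X → Finset X → ℝ}
    (hca : IsLiftedCost c κ ca) :
    ∑ A, ∑ B, ca A B * liftPlan μ ν γ A B = ∑ x, ∑ y, c x y * γ x y := by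
  simp [hca.sum_mul_eq, rowExcess_liftPlan, colExcess_liftPlan,
    liftPlan_singleton_singleton]

lemma transportCosts_subset_maxPlusCosts {c : X → X → ℝ} {κ : ℝ}
    {ca : Finset X → Finset X → ℝ} (hca : IsLiftedCost c κ ca) (hμ0 : μ ∅ = 0) (hν0 : ν ∅ = 0)
    (hμ : Monotone μ) (hν : Monotone ν) (hμ1 : ∀ A, μ A ≤ 1) (hν1 : ∀ B, ν B ≤ 1) :
    transportCosts μ ν c ⊆ maxPlusCosts μ ν ca := by
  rintro _ ⟨γ, hγ, rfl⟩
  exact ⟨_, maxPlusFeas_liftPlan hμ0 hν0 hμ hν hμ1 hν1 hγ, hca.sum_mul_liftPlan.symm⟩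

end LiftPlanFeasible

theorem stmt11 {X : Type*} [Fintype X] [DecidableEq X]
    (μ ν : Finset X → ℝ)
    (hμrange : ∀ A : Finset X, 0 ≤ μ A ∧ μ A ≤ 1)
    (hμ0 : μ (∅ : Finset X) = 0) (hμ1 : μ (Finset.univ : Finset X) = 1)
    (hμadd : ∀ A B : Finset X, Disjoint A B → μ (A ∪ B) = μ A + μ B)
    (hνrange : ∀ B : Finset X, 0 ≤ ν B ∧ ν B ≤ 1)
    (hν0 : ν (∅ : Finset X) = 0) (hν1 : ν (Finset.univ : Finset X) = 1)
    (hνadd : ∀ A B : Finset X, Disjoint A B → ν (A ∪ B) = ν A + ν B)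
    (c : X → X → ℝ) (hc : ∀ x y, 0 ≤ c x y)
    (κ : ℝ) (hκ : ∀ x y, c x y < κ)
    (ca : Finset X → Finset X → ℝ)
    (hca1 : ∀ x y : X, ca {x} {y} = c x y)
    (hca2 : ∀ A B : Finset X, A.card = 1 → B.card ≠ 1 → ca A B = κ)
    (hca3 : ∀ A B : Finset X, A.card ≠ 1 → B.card = 1 → ca A B = κ)
    (hca4 : ∀ A B : Finset X, A.card ≠ 1 → B.card ≠ 1 → ca A B = 0) :
    sInf {t : ℝ | ∃ γ : X → X → ℝ, ClassFeas μ ν γ ∧ t = ∑ x, ∑ y, c x y * γ x y} =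
      sInf {t : ℝ | ∃ assg : Finset X → Finset X → ℝ, MaxPlusFeas μ ν assg ∧
        t = ∑ A : Finset X, ∑ B : Finset X, ca A B * assg A B} ∧
    ∀ assg : Finset X → Finset X → ℝ, MaxPlusFeas μ ν assg →
      (∑ A : Finset X, ∑ B : Finset X, ca A B * assg A B) =
        sInf {t : ℝ | ∃ assg' : Finset X → Finset X → ℝ, MaxPlusFeas μ ν assg' ∧
          t = ∑ A : Finset X, ∑ B : Finset X, ca A B * assg' A B} →
      ClassFeas μ ν (fun x y => assg {x} {y}) ∧
      (∑ x, ∑ y, c x y * assg {x} {y}) =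
        sInf {t : ℝ | ∃ γ : X → X → ℝ, ClassFeas μ ν γ ∧ t = ∑ x, ∑ y, c x y * γ x y} := by
  have hca : IsLiftedCost c κ ca := ⟨hca1, hca2, hca3, hca4⟩
  have hcκ (x y : X) : c x y ≤ κ := (hκ x y).le
  have hμ : Monotone μ := monotone_of_additive (fun A => (hμrange A).1) hμadd
  have hν : Monotone ν := monotone_of_additive (fun B => (hνrange B).1) hνadd
  have hμν : ∑ x, μ {x} = ∑ y, ν {y} := by
    rw [sum_apply_singleton_of_additive hμ0 hμadd, sum_apply_singleton_of_additive hν0 hνadd,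
      hμ1, hν1]
  have hκpos : 0 < κ := by
    obtain ⟨x, -⟩ : (univ : Finset X).Nonempty :=
      nonempty_iff_ne_empty.2 fun h => by simp [h, hμ0] at hμ1
    exact (hc x x).trans_lt (hκ x x)
  have heq : sInf (transportCosts μ ν c) = sInf (maxPlusCosts μ ν ca) :=
    csInf_eq_csInf_of_subset
      (transportCosts_nonempty (fun x => (hμrange {x}).1) (fun y => (hνrange {y}).1) hμν)
      (transportCosts_subset_maxPlusCosts hca hμ0 hν0 hμ hν (fun A => (hμrange A).2)
        (fun B => (hνrange B).2))
      (csInf_transportCosts_mem_lowerBounds hμ0 hν0 hμν hc hcκ hca hκpos.le)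
  refine ⟨heq, fun assg h (hopt : _ = sInf (maxPlusCosts μ ν ca)) => ?_⟩
  have hE := h.sum_rowExcess_eq_zero_of_le hμ0 hν0 hμν hc hcκ hca hκpos (hopt.trans heq.symm).le
  refine ⟨h.classFeas_of_sum_rowExcess_eq_zero hμ0 hν0 hμν hE, ?_⟩
  rw [← h.sum_mul_eq_of_sum_rowExcess_eq_zero hμ0 hν0 hμν hca hE, hopt]
  exact heq.symm
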